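/- arXiv:2311.01368 — 5 statements merged into one kernel-verified Lean document; each statement's English description precedes it below -/
import Mathlib

section
/- Let #(κ) = e^{6κ} + (-8κ² + 4κ - 1)e^{4κ} + (-8κ² - 4κ - 1)e^{2κ} + 1. Then #(κ) > 0 for all κ > 0. -/
set_option maxHeartbeats 1000000 in
theorem stmt_0 (κ : ℝ) (hκ : 0 < κ) :
    0 < Real.exp (6 * κ) + (-8 * κ ^ 2 + 4 * κ - 1) * Real.exp (4 * κ)
        + (-8 * κ ^ 2 - 4 * κ - 1) * Real.exp (2 * κ) + 1 := by
  set x := Real.exp κ with hx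
  have h6 : Real.exp (6 * κ) = x ^ 6 := by
    rw [hx, ← Real.exp_nat_mul]; norm_num
  have h4 : Real.exp (4 * κ) = x ^ 4 := by
    rw [hx, ← Real.exp_nat_mul]; norm_num
  have h2 : Real.exp (2 * κ) = x ^ 2 := by
    rw [hx, ← Real.exp_nat_mul]; norm_num
  rw [h6, h4, h2]
  have hx1 : 1 < x := by
    rw [hx]; have := Real.add_one_le_exp κ; linarith
  have ht : 1 + κ + κ^2/2 + κ^3/6 + κ^4/24 ≤ x := by
    have := Real.sum_le_exp_of_nonneg (le_of_lt hκ) 5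
    simp [Finset.sum_range_succ, Nat.factorial] at this
    rw [hx]
    nlinarith [this]
  have hxpos : 0 < x := lt_trans one_pos hx1
  have hμ : 2*x*(κ + κ^3/6) ≤ x^2 - 1 := by
    nlinarith [mul_nonneg (sub_nonneg.2 ht) (le_of_lt hκ),
      mul_nonneg (mul_nonneg (sub_nonneg.2 ht) (le_of_lt hκ)) (le_of_lt hκ),
      sq_nonneg (x - 1 - κ), sq_nonneg κ, mul_pos hκ hκ,
      mul_pos (mul_pos hκ hκ) hκ, sq_nonneg (κ^2)]
  have hApos : 0 < 1 - κ + κ^3/3 := by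
    nlinarith [mul_nonneg (sq_nonneg (κ-1)) (by linarith : (0:ℝ) ≤ κ+2)]
  have hTpos : 0 < 1 + κ + κ^2/2 + κ^3/6 + κ^4/24 := by positivity
  have hg : 0 < (1+κ+κ^2/2+κ^3/6+κ^4/24)^2 * (1-κ+κ^3/3) + (1-κ+κ^3/3) - 2 := by
    have h5 := pow_pos hκ 5
    have h6 := pow_pos hκ 6
    have h7 := pow_pos hκ 7
    have h8 := pow_pos hκ 8
    have h9 := pow_pos hκ 9
    have h10 := pow_pos hκ 10
    have h11 := pow_pos hκ 11
    nlinarith [h5, h6, h7, h8, h9, h10, h11]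
  have hK : (κ - κ^3/3) * (x^2+1) < x^2 - 1 := by
    have hsq : (1+κ+κ^2/2+κ^3/6+κ^4/24)^2 ≤ x^2 := by nlinarith [ht, hTpos]
    have := mul_le_mul_of_nonneg_right hsq (le_of_lt hApos)
    nlinarith [this, hg]
  have hx21 : (0:ℝ) ≤ x^2 - 1 := by nlinarith
  have hA : 0 ≤ ((x^2-1) - 2*x*(κ + κ^3/6)) * ((x^2-1) + 2*x*(κ + κ^3/6)) * (x^2+1) := by
    have h1 : 0 ≤ (x^2-1) - 2*x*(κ + κ^3/6) := by linarith
    have h2 : 0 ≤ (x^2-1) + 2*x*(κ + κ^3/6) := by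
      have : 0 ≤ 2*x*(κ + κ^3/6) := by positivity
      linarith
    have h3 : (0:ℝ) ≤ x^2+1 := by positivity
    exact mul_nonneg (mul_nonneg h1 h2) h3
  have hB : 0 < (x^2 - 1 - (κ - κ^3/3) * (x^2+1)) * (4*κ*x^2) := by
    apply mul_pos (by linarith) (by positivity)
  have hC : 0 < κ^6 * x^2 * (x^2+1) := by positivity
  nlinarith [hA, hB, hC]
end

section
/- The function β(κ) = (sinh(2κ) - 2κ) / (κ²(2κ + sinh(2κ))) is strictly decreasing on (0, ∞), with limit 1/3 as κ → 0⁺ and limit 0 as κ → +∞. -/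
/-!
Substituting `x = 2κ` turns the function into `4 g(x)` with `g = bondCurve`. The derivative of `g`
has the sign of `x² (cosh x + 1) - sinh² x - x sinh x`. Writing `sinh² x = (cosh x - 1)(cosh x + 1)`
and `sinh x = (cosh x + 1) tanh (x/2)`, this is negative by the Taylor bounds
`cosh x > 1 + x²/2 + x⁴/24` and `tanh y > y - y³/3`. Near `0`, the bounds
`x + x³/6 < sinh x < x + x³ cosh x / 6` and `sinh x < x cosh x` squeeze `g` between
`1 / (6 (1 + cosh x))` and `cosh x / 12`; at infinity `0 ≤ g x ≤ 1 / x²`.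
-/

open Real Filter Set Finset
open scoped Nat Topology

lemma pos_of_hasDerivAt_of_pos {f f' : ℝ → ℝ} (hf : ∀ x, HasDerivAt f (f' x) x)
    (h₀ : f 0 = 0) (hf' : ∀ x, 0 < x → 0 < f' x) {x : ℝ} (hx : 0 < x) : 0 < f x := by
  have hmono : StrictMonoOn f (Ici 0) := by
    refine strictMonoOn_of_hasDerivWithinAt_pos (convex_Ici 0)
      (fun y _ => (hf y).continuousAt.continuousWithinAt) (fun y _ => (hf y).hasDerivWithinAt) ?_
    rw [interior_Ici]
    exact fun y hy => hf' y hy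
  simpa [h₀] using hmono (mem_Ici.2 le_rfl) hx.le hx

lemma sum_range_le_cosh (n : ℕ) (x : ℝ) :
    ∑ k ∈ range n, x ^ (2 * k) / (2 * k)! ≤ cosh x :=
  sum_le_hasSum _ (fun k _ => by rw [pow_mul]; positivity) (Real.hasSum_cosh x)

lemma sum_range_le_sinh (n : ℕ) {x : ℝ} (hx : 0 ≤ x) :
    ∑ k ∈ range n, x ^ (2 * k + 1) / (2 * k + 1)! ≤ sinh x :=
  sum_le_hasSum _ (fun k _ => by positivity) (Real.hasSum_sinh x)

lemma add_pow_three_div_six_lt_sinh {x : ℝ} (hx : 0 < x) : x + x ^ 3 / 6 < sinh x := by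
  have h : x + x ^ 3 / 6 + x ^ 5 / 120 ≤ sinh x := by
    convert sum_range_le_sinh 3 hx.le using 1; norm_num [sum_range_succ, Nat.factorial]
  have : 0 < x ^ 5 := by positivity
  linarith

lemma one_add_sq_div_two_add_pow_four_div_lt_cosh {x : ℝ} (hx : x ≠ 0) :
    1 + x ^ 2 / 2 + x ^ 4 / 24 < cosh x := by
  have h : 1 + x ^ 2 / 2 + x ^ 4 / 24 + x ^ 6 / 720 ≤ cosh x := by
    convert sum_range_le_cosh 4 x using 1; norm_num [sum_range_succ, Nat.factorial]
  have : 0 < x ^ 6 := by positivity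
  linarith

lemma sinh_lt_mul_cosh {x : ℝ} (hx : 0 < x) : sinh x < x * cosh x := by
  refine sub_pos.1 (pos_of_hasDerivAt_of_pos (f := fun x => x * cosh x - sinh x)
    (f' := fun x => x * sinh x) (fun x => ?_) (by simp)
    (fun x hx => mul_pos hx (sinh_pos_iff.2 hx)) hx)
  exact (((hasDerivAt_id' x).mul (hasDerivAt_cosh x)).sub (hasDerivAt_sinh x)).congr_deriv (by ring)

lemma cosh_sub_one_lt_sq_div_two_mul_cosh {x : ℝ} (hx : 0 < x) :
    cosh x - 1 < x ^ 2 / 2 * cosh x := by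
  refine sub_pos.1 (pos_of_hasDerivAt_of_pos (f := fun x => x ^ 2 / 2 * cosh x - (cosh x - 1))
    (f' := fun x => x * cosh x - sinh x + x ^ 2 / 2 * sinh x) (fun x => ?_) (by simp)
    (fun x hx => ?_) hx)
  · exact ((((hasDerivAt_pow 2 x).div_const 2).mul (hasDerivAt_cosh x)).sub
      ((hasDerivAt_cosh x).sub_const 1)).congr_deriv (by push_cast; ring)
  · have := sinh_lt_mul_cosh hx
    have := sinh_pos_iff.2 hx
    positivity

lemma sinh_sub_self_lt_pow_three_div_six_mul_cosh {x : ℝ} (hx : 0 < x) :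
    sinh x - x < x ^ 3 / 6 * cosh x := by
  refine sub_pos.1 (pos_of_hasDerivAt_of_pos (f := fun x => x ^ 3 / 6 * cosh x - (sinh x - x))
    (f' := fun x => x ^ 2 / 2 * cosh x - (cosh x - 1) + x ^ 3 / 6 * sinh x) (fun x => ?_) (by simp)
    (fun x hx => ?_) hx)
  · exact ((((hasDerivAt_pow 3 x).div_const 6).mul (hasDerivAt_cosh x)).sub
      ((hasDerivAt_sinh x).sub (hasDerivAt_id' x))).congr_deriv (by push_cast; ring)
  · have := cosh_sub_one_lt_sq_div_two_mul_cosh hx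
    have := sinh_pos_iff.2 hx
    have : 0 < x ^ 3 / 6 * sinh x := by positivity
    linarith

lemma sub_pow_three_div_three_mul_cosh_lt_sinh {x : ℝ} (hx : 0 < x) :
    (x - x ^ 3 / 3) * cosh x < sinh x := by
  refine sub_pos.1 (pos_of_hasDerivAt_of_pos
    (f := fun x => sinh x - x * cosh x + x ^ 3 / 3 * cosh x)
    (f' := fun x => x * (x * cosh x - sinh x) + x ^ 3 / 3 * sinh x) (fun x => ?_) (by simp)
    (fun x hx => ?_) hx |>.trans_eq (by ring))
  · exact (((hasDerivAt_sinh x).sub ((hasDerivAt_id' x).mul (hasDerivAt_cosh x))).add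
      (((hasDerivAt_pow 3 x).div_const 3).mul (hasDerivAt_cosh x))).congr_deriv (by push_cast; ring)
  · have := sub_pos.2 (sinh_lt_mul_cosh hx)
    have := sinh_pos_iff.2 hx
    positivity

lemma sq_mul_cosh_add_one_lt {x : ℝ} (hx : 0 < x) :
    x ^ 2 * (cosh x + 1) < sinh x ^ 2 + x * sinh x := by
  have hc := one_add_sq_div_two_add_pow_four_div_lt_cosh hx.ne'
  have htanh : (cosh x + 1) * (x / 2 - x ^ 3 / 24) < sinh x := by
    have h := sub_pow_three_div_three_mul_cosh_lt_sinh (half_pos hx)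
    have hC := cosh_pos (x / 2)
    have hx2 : 2 * (x / 2) = x := by ring
    have hsinh := sinh_two_mul (x / 2)
    have hcosh := cosh_two_mul (x / 2)
    rw [hx2] at hsinh hcosh
    rw [hsinh, hcosh, sinh_sq]
    nlinarith [mul_lt_mul_of_pos_left h (mul_pos two_pos hC)]
  have hs2 : sinh x ^ 2 = cosh x ^ 2 - 1 := by rw [cosh_sq]; ring
  nlinarith [mul_lt_mul_of_pos_left htanh hx,
    mul_pos (by linarith [one_le_cosh x] : 0 < cosh x + 1)
      (by linarith : 0 < 24 * (cosh x - 1) - 12 * x ^ 2 - x ^ 4)]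

noncomputable def bondCurve (x : ℝ) : ℝ := (sinh x - x) / (x ^ 2 * (x + sinh x))

lemma bondCurve_denom_pos {x : ℝ} (hx : 0 < x) : 0 < x ^ 2 * (x + sinh x) := by
  have := sinh_pos_iff.2 hx
  positivity

lemma hasDerivAt_bondCurve {x : ℝ} (hx : 0 < x) :
    HasDerivAt bondCurve
      (-2 * x * (sinh x ^ 2 + x * sinh x - x ^ 2 * (cosh x + 1)) / (x ^ 2 * (x + sinh x)) ^ 2)
      x := by
  have hnum : HasDerivAt (fun x => sinh x - x) (cosh x - 1) x :=
    (hasDerivAt_sinh x).sub (hasDerivAt_id' x)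
  have hden : HasDerivAt (fun x => x ^ 2 * (x + sinh x))
      (2 * x * (x + sinh x) + x ^ 2 * (1 + cosh x)) x :=
    ((hasDerivAt_pow 2 x).mul ((hasDerivAt_id' x).add (hasDerivAt_sinh x))).congr_deriv
      (by simp only [Pi.add_apply]; push_cast; ring)
  exact (hnum.div hden (bondCurve_denom_pos hx).ne').congr_deriv (by congr 1; ring)

lemma strictAntiOn_bondCurve : StrictAntiOn bondCurve (Ioi 0) := by
  refine strictAntiOn_of_deriv_neg (convex_Ioi 0)
    (fun x hx => (hasDerivAt_bondCurve hx).continuousAt.continuousWithinAt) fun x hx => ?_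
  rw [interior_Ioi] at hx
  rw [(hasDerivAt_bondCurve hx).deriv]
  have := mul_pos hx (sub_pos.2 (sq_mul_cosh_add_one_lt hx))
  exact div_neg_of_neg_of_pos (by linarith) (pow_pos (bondCurve_denom_pos hx) 2)

lemma one_div_six_mul_one_add_cosh_le_bondCurve {x : ℝ} (hx : 0 < x) :
    1 / (6 * (1 + cosh x)) ≤ bondCurve x := by
  have := add_pow_three_div_six_lt_sinh hx
  have := sinh_lt_mul_cosh hx
  rw [bondCurve, div_le_div_iff₀ (by positivity) (bondCurve_denom_pos hx)]
  nlinarith [one_le_cosh x]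

lemma bondCurve_le_cosh_div_twelve {x : ℝ} (hx : 0 < x) : bondCurve x ≤ cosh x / 12 := by
  have := sinh_sub_self_lt_pow_three_div_six_mul_cosh hx
  have := (self_lt_sinh_iff).2 hx
  rw [bondCurve, div_le_div_iff₀ (bondCurve_denom_pos hx) (by norm_num)]
  nlinarith [one_le_cosh x]

lemma tendsto_bondCurve_nhdsGT_zero : Tendsto bondCurve (𝓝[>] 0) (𝓝 (1 / 12)) := by
  have hlower : Tendsto (fun x => 1 / (6 * (1 + cosh x))) (𝓝[>] 0) (𝓝 (1 / 12)) := by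
    have : ContinuousAt (fun x => 1 / (6 * (1 + cosh x))) 0 := by fun_prop (disch := positivity)
    simpa [show (1 : ℝ) / (6 * (1 + 1)) = 1 / 12 by norm_num] using
      this.tendsto.mono_left nhdsWithin_le_nhds
  have hupper : Tendsto (fun x => cosh x / 12) (𝓝[>] 0) (𝓝 (1 / 12)) := by
    simpa using (continuous_cosh.div_const 12).continuousAt.tendsto.mono_left
      (nhdsWithin_le_nhds (a := (0 : ℝ)))
  exact tendsto_of_tendsto_of_tendsto_of_le_of_le' hlower hupper
    (eventually_nhdsWithin_of_forall fun x hx => one_div_six_mul_one_add_cosh_le_bondCurve hx)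
    (eventually_nhdsWithin_of_forall fun x hx => bondCurve_le_cosh_div_twelve hx)

lemma bondCurve_le_inv_sq {x : ℝ} (hx : 0 < x) : bondCurve x ≤ (x ^ 2)⁻¹ := by
  have := sinh_pos_iff.2 hx
  rw [bondCurve, div_le_iff₀ (bondCurve_denom_pos hx), inv_mul_cancel_left₀ (by positivity)]
  linarith

lemma tendsto_bondCurve_atTop : Tendsto bondCurve atTop (𝓝 0) := by
  refine tendsto_of_tendsto_of_tendsto_of_le_of_le' tendsto_const_nhds
    (tendsto_inv_atTop_zero.comp (tendsto_pow_atTop two_ne_zero)) ?_ ?_ <;>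
    filter_upwards [eventually_gt_atTop 0] with x hx
  · have := (self_lt_sinh_iff).2 hx
    exact div_nonneg (by linarith) (bondCurve_denom_pos hx).le
  · exact bondCurve_le_inv_sq hx

lemma div_eq_four_mul_bondCurve_two_mul (κ : ℝ) :
    (sinh (2 * κ) - 2 * κ) / (κ ^ 2 * (2 * κ + sinh (2 * κ))) = 4 * bondCurve (2 * κ) := by
  have hden : (2 * κ) ^ 2 * (2 * κ + sinh (2 * κ)) = 4 * (κ ^ 2 * (2 * κ + sinh (2 * κ))) := by ring
  rw [bondCurve, hden, ← mul_div_assoc, mul_div_mul_left _ _ four_ne_zero]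

theorem stmt_1 :
    StrictAntiOn (fun κ : ℝ => (Real.sinh (2 * κ) - 2 * κ) / (κ ^ 2 * (2 * κ + Real.sinh (2 * κ))))
      (Set.Ioi 0) ∧
    Filter.Tendsto (fun κ : ℝ => (Real.sinh (2 * κ) - 2 * κ) / (κ ^ 2 * (2 * κ + Real.sinh (2 * κ))))
      (nhdsWithin 0 (Set.Ioi 0)) (nhds (1 / 3)) ∧
    Filter.Tendsto (fun κ : ℝ => (Real.sinh (2 * κ) - 2 * κ) / (κ ^ 2 * (2 * κ + Real.sinh (2 * κ))))
      Filter.atTop (nhds 0) := by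
  simp only [div_eq_four_mul_bondCurve_two_mul]
  have hdouble : Tendsto (fun κ : ℝ => 2 * κ) (𝓝[>] 0) (𝓝[>] 0) :=
    tendsto_nhdsWithin_of_tendsto_nhds_of_eventually_within _
      (by simpa using ((continuous_const_mul (2 : ℝ)).tendsto 0).mono_left nhdsWithin_le_nhds)
      (eventually_nhdsWithin_of_forall fun κ (hκ : 0 < κ) => by simp [hκ])
  refine ⟨fun a ha b hb hab => ?_, ?_, ?_⟩
  · exact mul_lt_mul_of_pos_left (strictAntiOn_bondCurve (by simpa using ha) (by simpa using hb)
      (by linarith)) four_pos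
  · have h := (tendsto_bondCurve_nhdsGT_zero.comp hdouble).const_mul 4
    rwa [show (4 : ℝ) * (1 / 12) = 1 / 3 by norm_num] at h
  · simpa using (tendsto_bondCurve_atTop.comp (tendsto_id.const_mul_atTop two_pos)).const_mul 4
end

section
/- Fix β ≥ 1/3. Then the function μ₀(κ) = κ / ((1 + βκ²) tanh(κ)) is strictly decreasing on (0, ∞). -/
/-!
Writing tanh = sinh / cosh, the derivative of μ₀ has the sign of
(1 - βκ²) sinh κ cosh κ - κ (1 + βκ²), which for x = 2κ is one eighth of
(4 - βx²) sinh x - x (4 + βx²). Since sinh x + x > 0, it suffices to treat β = 1/3, i.e. the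
Padé-type bound (12 - x²) sinh x < x³ + 12x; the threshold 1/3 is sharp as x → 0.
That bound follows from differentiating x³ + 12x + (x² - 12) sinh x four times: every
derivative up to the third vanishes at 0 and the fourth, 8x cosh x + x² sinh x, is positive.
-/

open Real

lemma pos_of_hasDerivAt_of_deriv_pos {f f' : ℝ → ℝ} (hf : ∀ x, HasDerivAt f (f' x) x)
    (h₀ : f 0 = 0) (hf' : ∀ x, 0 < x → 0 < f' x) : ∀ x, 0 < x → 0 < f x := by
  have hmono : StrictMonoOn f (Set.Ici 0) := by
    refine strictMonoOn_of_deriv_pos (convex_Ici 0)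
      (fun y _ ↦ (hf y).continuousAt.continuousWithinAt) fun y hy ↦ ?_
    rw [interior_Ici] at hy
    exact (hf y).deriv ▸ hf' y hy
  intro x hx
  simpa [h₀] using hmono (Set.mem_Ici.2 le_rfl) hx.le hx

lemma twelve_sub_sq_mul_sinh_lt {x : ℝ} (hx : 0 < x) :
    (12 - x ^ 2) * sinh x < x ^ 3 + 12 * x := by
  have h₄ : ∀ x : ℝ, 0 < x → 0 < 8 * x * cosh x + x ^ 2 * sinh x :=
    fun x hx ↦ by positivity
  have h₃ := pos_of_hasDerivAt_of_deriv_pos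
    (f := fun x ↦ 6 + (x ^ 2 - 6) * cosh x + 6 * x * sinh x)
    (fun x ↦ ((((hasDerivAt_pow 2 x).sub_const 6).mul (hasDerivAt_cosh x)).const_add 6 |>.add
      (((hasDerivAt_id' x).const_mul 6).mul (hasDerivAt_sinh x))).congr_deriv (by ring))
    (by simp) h₄
  have h₂ := pos_of_hasDerivAt_of_deriv_pos
    (f := fun x ↦ 6 * x + (x ^ 2 - 10) * sinh x + 4 * x * cosh x)
    (fun x ↦ (((hasDerivAt_id' x).const_mul 6).add
      (((hasDerivAt_pow 2 x).sub_const 10).mul (hasDerivAt_sinh x)) |>.add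
      (((hasDerivAt_id' x).const_mul 4).mul (hasDerivAt_cosh x))).congr_deriv (by ring))
    (by simp) h₃
  have h₁ := pos_of_hasDerivAt_of_deriv_pos
    (f := fun x ↦ 3 * x ^ 2 + 12 + 2 * x * sinh x + (x ^ 2 - 12) * cosh x)
    (fun x ↦ ((((hasDerivAt_pow 2 x).const_mul 3).add_const 12).add
      (((hasDerivAt_id' x).const_mul 2).mul (hasDerivAt_sinh x)) |>.add
      (((hasDerivAt_pow 2 x).sub_const 12).mul (hasDerivAt_cosh x))).congr_deriv (by ring))
    (by simp) h₂
  have h₀ := pos_of_hasDerivAt_of_deriv_pos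
    (f := fun x ↦ x ^ 3 + 12 * x + (x ^ 2 - 12) * sinh x)
    (fun x ↦ (((hasDerivAt_pow 3 x).add ((hasDerivAt_id' x).const_mul 12)).add
      (((hasDerivAt_pow 2 x).sub_const 12).mul (hasDerivAt_sinh x))).congr_deriv (by ring))
    (by simp) h₁ x hx
  linarith

lemma four_sub_mul_sq_mul_sinh_lt {β x : ℝ} (hβ : 1 / 3 ≤ β) (hx : 0 < x) :
    (4 - β * x ^ 2) * sinh x < x * (4 + β * x ^ 2) := by
  have hexcess := mul_nonneg (sub_nonneg.mpr hβ) (by positivity : 0 ≤ x ^ 2 * (sinh x + x))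
  linarith [twelve_sub_sq_mul_sinh_lt hx]

lemma hasDerivAt_div_mul_tanh {β κ : ℝ} (hβκ : 1 + β * κ ^ 2 ≠ 0) (hκ : κ ≠ 0) :
    HasDerivAt (fun κ : ℝ ↦ κ / ((1 + β * κ ^ 2) * tanh κ))
      (((1 - β * κ ^ 2) * sinh κ * cosh κ - κ * (1 + β * κ ^ 2)) /
        ((1 + β * κ ^ 2) * sinh κ) ^ 2) κ := by
  have hfun : (fun κ : ℝ ↦ κ / ((1 + β * κ ^ 2) * tanh κ)) =
      fun κ ↦ κ * cosh κ / ((1 + β * κ ^ 2) * sinh κ) := by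
    ext κ
    rw [tanh_eq_sinh_div_cosh, mul_div_assoc', div_div_eq_mul_div]
  have hden : (1 + β * κ ^ 2) * sinh κ ≠ 0 := mul_ne_zero hβκ (sinh_ne_zero.mpr hκ)
  rw [hfun]
  refine ((hasDerivAt_id' κ).fun_mul (hasDerivAt_cosh κ)).fun_div
    ((((hasDerivAt_pow 2 κ).const_mul β).const_add 1).fun_mul (hasDerivAt_sinh κ)) hden
    |>.congr_deriv ?_
  congr 1
  linear_combination (-κ * (1 + β * κ ^ 2)) * cosh_sq_sub_sinh_sq κ

theorem stmt_2 (β : ℝ) (hβ : 1 / 3 ≤ β) :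
    StrictAntiOn (fun κ : ℝ => κ / ((1 + β * κ ^ 2) * Real.tanh κ)) (Set.Ioi 0) := by
  have hderiv (κ : ℝ) (hκ : 0 < κ) :=
    hasDerivAt_div_mul_tanh (β := β) (by nlinarith [sq_nonneg κ]) hκ.ne'
  refine strictAntiOn_of_deriv_neg (convex_Ioi 0)
    (fun κ hκ ↦ (hderiv κ hκ).continuousAt.continuousWithinAt) fun κ hκ ↦ ?_
  rw [interior_Ioi, Set.mem_Ioi] at hκ
  rw [(hderiv κ hκ).deriv]
  refine div_neg_of_neg_of_pos ?_ (by positivity)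
  have key := four_sub_mul_sq_mul_sinh_lt hβ (by positivity : 0 < 2 * κ)
  rw [sinh_two_mul] at key
  linarith
end

section
/- The derivative of μ₀(κ; β) = κ/((1+βκ²) tanh κ) with respect to κ equals −κ²(tanh κ + κ(1 − tanh²κ))(β − β_c(κ)) / ((βκ² + 1)² tanh²κ), where β_c(κ) = (sinh(2κ) − 2κ)/(κ²(2κ + sinh(2κ))). -/
/-! Write `t = tanh κ`, so that `tanh' = 1 - t²` and `sinh 2κ = 2t / (1 - t²)`. The quotient rule
gives the derivative with numerator `t (1 - βκ²) - κ (1 + βκ²)(1 - t²)`, which is linear in `β`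
and vanishes exactly at `β = β_c(κ) = (t - κ (1 - t²)) / (κ² (t + κ (1 - t²)))`. -/

namespace Real

theorem one_sub_tanh_sq (x : ℝ) : 1 - tanh x ^ 2 = (cosh x ^ 2)⁻¹ := by
  have hc := (cosh_pos x).ne'
  rw [tanh_eq_sinh_div_cosh]
  field_simp
  linear_combination cosh_sq_sub_sinh_sq x

theorem one_sub_tanh_sq_pos (x : ℝ) : 0 < 1 - tanh x ^ 2 := by
  rw [one_sub_tanh_sq]
  have := cosh_pos x
  positivity

theorem hasDerivAt_tanh (x : ℝ) : HasDerivAt tanh (1 - tanh x ^ 2) x := by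
  have hc := (cosh_pos x).ne'
  have h := (hasDerivAt_sinh x).div (hasDerivAt_cosh x) hc
  rw [show sinh / cosh = tanh from funext fun y => (tanh_eq_sinh_div_cosh y).symm] at h
  refine h.congr_deriv ?_
  rw [one_sub_tanh_sq]
  field_simp
  linear_combination cosh_sq_sub_sinh_sq x

theorem tanh_pos {x : ℝ} (hx : 0 < x) : 0 < tanh x := by
  rw [tanh_eq_sinh_div_cosh]
  exact div_pos (sinh_pos_iff.mpr hx) (cosh_pos x)

theorem sinh_two_mul_mul_one_sub_tanh_sq (x : ℝ) :
    sinh (2 * x) * (1 - tanh x ^ 2) = 2 * tanh x := by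
  have hc := (cosh_pos x).ne'
  rw [one_sub_tanh_sq, sinh_two_mul, tanh_eq_sinh_div_cosh]
  field_simp

end Real

open Real

theorem sinh_two_mul_sub_two_mul_div_eq_tanh (κ : ℝ) :
    (sinh (2 * κ) - 2 * κ) / (κ ^ 2 * (2 * κ + sinh (2 * κ))) =
      (tanh κ - κ * (1 - tanh κ ^ 2)) / (κ ^ 2 * (tanh κ + κ * (1 - tanh κ ^ 2))) := by
  have hs : (1 - tanh κ ^ 2) / 2 ≠ 0 := (div_pos (one_sub_tanh_sq_pos κ) two_pos).ne'
  have key := sinh_two_mul_mul_one_sub_tanh_sq κ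
  rw [← mul_div_mul_right _ _ hs]
  congr 1
  · linear_combination key / 2
  · linear_combination (κ ^ 2 / 2) * key

theorem hasDerivAt_div_one_add_mul_sq_mul_tanh {β κ : ℝ} (hβκ : 1 + β * κ ^ 2 ≠ 0)
    (hκ : κ ≠ 0) :
    HasDerivAt (fun k : ℝ => k / ((1 + β * k ^ 2) * tanh k))
      ((tanh κ * (1 - β * κ ^ 2) - κ * (1 + β * κ ^ 2) * (1 - tanh κ ^ 2)) /
        ((1 + β * κ ^ 2) * tanh κ) ^ 2) κ := by
  have ht : tanh κ ≠ 0 := by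
    rcases hκ.lt_or_gt with h | h
    · simpa using (tanh_pos (neg_pos.mpr h)).ne'
    · exact (tanh_pos h).ne'
  have hg : HasDerivAt (fun k : ℝ => 1 + β * k ^ 2) (β * (2 * κ)) κ := by
    simpa using ((hasDerivAt_pow 2 κ).const_mul β).const_add 1
  refine ((hasDerivAt_id' κ).fun_div (hg.fun_mul (hasDerivAt_tanh κ))
    (mul_ne_zero hβκ ht)).congr_deriv ?_
  ring

theorem stmt_4 (β κ : ℝ) (hβ : 0 < β) (hκ : 0 < κ) :
    deriv (fun k : ℝ => k / ((1 + β * k ^ 2) * Real.tanh k)) κ =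
      -(κ ^ 2 * (Real.tanh κ + κ * (1 - Real.tanh κ ^ 2)) *
          (β - (Real.sinh (2 * κ) - 2 * κ) / (κ ^ 2 * (2 * κ + Real.sinh (2 * κ))))) /
        ((β * κ ^ 2 + 1) ^ 2 * Real.tanh κ ^ 2) := by
  have ht := tanh_pos hκ
  have hs := one_sub_tanh_sq_pos κ
  have hβκ : 0 < 1 + β * κ ^ 2 := by positivity
  rw [(hasDerivAt_div_one_add_mul_sq_mul_tanh hβκ.ne' hκ.ne').deriv,
    sinh_two_mul_sub_two_mul_div_eq_tanh]
  have hm : 0 < tanh κ + κ * (1 - tanh κ ^ 2) := by positivity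
  field_simp
  ring
end

section
/- For all κ > 0 and β ∈ (0, 1/3), the quadratic-in-β polynomial a(κ)β² + b(κ)β + c(κ) satisfies a(κ) > 0, b(κ) > 0 and c(κ) < 0, where a(κ) = κ⁴((3t⁴ − 2t² − 1)κ² − 6t(t² − 1)κ + 3t²), b(κ) = 2κ²((3t⁴ − 2t² − 1)κ² − 4t(t² − 1)κ + 3t²), c(κ) = (3t⁴ − 2t² − 1)κ² − 2t(t² − 1)κ − t², with t = tanh(κ). -/
set_option maxHeartbeats 1000000

/-- Positivity certificate: with `Y = 1 + 2k + 2k² + 4k³/3 + d`, the polynomial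
`3(Y²-1)² + 16kY(Y²-1) - 16k²Y(Y²-Y+1)` has only nonnegative coefficients when
expanded in `(k,d)`, including a strict `96k²` term. -/
lemma fb_poly_pos (k d : ℝ) (hk : 0 < k) (hd : 0 ≤ d) :
    0 < 3 * ((1 + 2*k + 2*k^2 + 4*k^3/3 + d)^2 - 1)^2
      + 16 * k * (1 + 2*k + 2*k^2 + 4*k^3/3 + d)
          * ((1 + 2*k + 2*k^2 + 4*k^3/3 + d)^2 - 1)
      - 16 * k^2 * (1 + 2*k + 2*k^2 + 4*k^3/3 + d)
          * ((1 + 2*k + 2*k^2 + 4*k^3/3 + d)^2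
              - (1 + 2*k + 2*k^2 + 4*k^3/3 + d) + 1) := by
  linarith [mul_nonneg (pow_nonneg hk.le 0) (pow_nonneg hd 2),
    mul_nonneg (pow_nonneg hk.le 0) (pow_nonneg hd 3),
    mul_nonneg (pow_nonneg hk.le 0) (pow_nonneg hd 4),
    mul_nonneg (pow_nonneg hk.le 1) (pow_nonneg hd 1),
    mul_nonneg (pow_nonneg hk.le 1) (pow_nonneg hd 2),
    mul_nonneg (pow_nonneg hk.le 1) (pow_nonneg hd 3),
    mul_nonneg (pow_nonneg hk.le 2) (pow_nonneg hd 1),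
    mul_nonneg (pow_nonneg hk.le 2) (pow_nonneg hd 2),
    mul_nonneg (pow_nonneg hk.le 2) (pow_nonneg hd 3),
    mul_nonneg (pow_nonneg hk.le 3) (pow_nonneg hd 1),
    mul_nonneg (pow_nonneg hk.le 3) (pow_nonneg hd 2),
    mul_nonneg (pow_nonneg hk.le 3) (pow_nonneg hd 3),
    mul_nonneg (pow_nonneg hk.le 4) (pow_nonneg hd 1),
    mul_nonneg (pow_nonneg hk.le 4) (pow_nonneg hd 2),
    mul_nonneg (pow_nonneg hk.le 5) (pow_nonneg hd 1),
    mul_nonneg (pow_nonneg hk.le 5) (pow_nonneg hd 2),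
    mul_nonneg (pow_nonneg hk.le 6) (pow_nonneg hd 1),
    mul_nonneg (pow_nonneg hk.le 6) (pow_nonneg hd 2),
    mul_nonneg (pow_nonneg hk.le 7) (pow_nonneg hd 1),
    mul_nonneg (pow_nonneg hk.le 8) (pow_nonneg hd 1),
    mul_nonneg (pow_nonneg hk.le 9) (pow_nonneg hd 1),
    pow_pos hk 2, pow_pos hk 3, pow_pos hk 4, pow_pos hk 5,
    pow_pos hk 6, pow_pos hk 7, pow_pos hk 8, pow_pos hk 9,
    pow_pos hk 10, pow_pos hk 11, pow_pos hk 12]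

theorem stmt_6 (κ β : ℝ) (hκ : 0 < κ) (hβ0 : 0 < β) (hβ : β < 1 / 3) :
    (0 < κ ^ 4 * ((3 * Real.tanh κ ^ 4 - 2 * Real.tanh κ ^ 2 - 1) * κ ^ 2
        - 6 * Real.tanh κ * (Real.tanh κ ^ 2 - 1) * κ + 3 * Real.tanh κ ^ 2)) ∧
    (0 < 2 * κ ^ 2 * ((3 * Real.tanh κ ^ 4 - 2 * Real.tanh κ ^ 2 - 1) * κ ^ 2
        - 4 * Real.tanh κ * (Real.tanh κ ^ 2 - 1) * κ + 3 * Real.tanh κ ^ 2)) ∧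
    ((3 * Real.tanh κ ^ 4 - 2 * Real.tanh κ ^ 2 - 1) * κ ^ 2
        - 2 * Real.tanh κ * (Real.tanh κ ^ 2 - 1) * κ - Real.tanh κ ^ 2 < 0) := by
  set t := Real.tanh κ with ht
  set Y := Real.exp (2 * κ) with hYdef
  -- cubic lower bound on Y = exp (2κ)
  have hYp : 1 + 2*κ + 2*κ^2 + 4*κ^3/3 ≤ Y := by
    have h := Real.sum_le_exp_of_nonneg (x := 2*κ) (by linarith) 4
    rw [hYdef]
    refine le_trans (le_of_eq ?_) h
    rw [Finset.sum_range_succ, Finset.sum_range_succ, Finset.sum_range_succ,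
      Finset.sum_range_succ, Finset.sum_range_zero]
    norm_num [Nat.factorial]
    ring
  have hY1 : 1 < Y := by nlinarith
  have hY0 : (0:ℝ) < Y := by linarith
  have hYne : Y + 1 ≠ 0 := by positivity
  -- t = (Y - 1)/(Y + 1)
  have ht2 : t = (Y - 1) / (Y + 1) := by
    rw [ht, Real.tanh_eq_sinh_div_cosh, Real.sinh_eq, Real.cosh_eq, hYdef,
      two_mul, Real.exp_add, Real.exp_neg]
    have h0 := Real.exp_pos κ
    field_simp
  have h4 : (0:ℝ) < (Y + 1)^4 := by positivity
  -- the b-bracket times (Y+1)^4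
  have hb : ((3*t^4 - 2*t^2 - 1)*κ^2 - 4*t*(t^2-1)*κ + 3*t^2) * (Y+1)^4
      = 3*(Y^2-1)^2 + 16*κ*Y*(Y^2-1) - 16*κ^2*Y*(Y^2-Y+1) := by
    rw [ht2]; field_simp; ring
  have ha : ((3*t^4 - 2*t^2 - 1)*κ^2 - 6*t*(t^2-1)*κ + 3*t^2) * (Y+1)^4
      = 3*(Y^2-1)^2 + 24*κ*Y*(Y^2-1) - 16*κ^2*Y*(Y^2-Y+1) := by
    rw [ht2]; field_simp; ring
  have hc : ((3*t^4 - 2*t^2 - 1)*κ^2 - 2*t*(t^2-1)*κ - t^2) * (Y+1)^4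
      = -(16*κ^2*Y*(Y-1)^2 + (4*κ*Y - (Y^2-1))^2) := by
    rw [ht2]; field_simp; ring
  -- positivity of the key polynomial
  have hFb : 0 < 3*(Y^2-1)^2 + 16*κ*Y*(Y^2-1) - 16*κ^2*Y*(Y^2-Y+1) := by
    have h := fb_poly_pos κ (Y - (1 + 2*κ + 2*κ^2 + 4*κ^3/3)) hκ (by linarith)
    have hsub : 1 + 2*κ + 2*κ^2 + 4*κ^3/3 + (Y - (1 + 2*κ + 2*κ^2 + 4*κ^3/3)) = Y := by
      ring
    rw [hsub] at h
    exact h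
  have hbbr : 0 < (3*t^4 - 2*t^2 - 1)*κ^2 - 4*t*(t^2-1)*κ + 3*t^2 := by
    have hprod : 0 < ((3*t^4 - 2*t^2 - 1)*κ^2 - 4*t*(t^2-1)*κ + 3*t^2) * (Y+1)^4 := by
      rw [hb]; exact hFb
    rcases mul_pos_iff.mp hprod with ⟨h, _⟩ | ⟨_, h⟩
    · exact h
    · linarith
  have habr : 0 < (3*t^4 - 2*t^2 - 1)*κ^2 - 6*t*(t^2-1)*κ + 3*t^2 := by
    have hY2 : 0 < Y^2 - 1 := by nlinarith
    have hextra : 0 < 8*κ*Y*(Y^2-1) := by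
      have := mul_pos (mul_pos (mul_pos (by norm_num : (0:ℝ) < 8) hκ) hY0) hY2
      linarith
    have hprod : 0 < ((3*t^4 - 2*t^2 - 1)*κ^2 - 6*t*(t^2-1)*κ + 3*t^2) * (Y+1)^4 := by
      rw [ha]; linarith
    rcases mul_pos_iff.mp hprod with ⟨h, _⟩ | ⟨_, h⟩
    · exact h
    · linarith
  have hcbr : (3*t^4 - 2*t^2 - 1)*κ^2 - 2*t*(t^2-1)*κ - t^2 < 0 := by
    have hprod : ((3*t^4 - 2*t^2 - 1)*κ^2 - 2*t*(t^2-1)*κ - t^2) * (Y+1)^4 < 0 := by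
      rw [hc]
      have h1 := mul_pos (mul_pos (mul_pos (show (0:ℝ) < 16 by norm_num)
        (pow_pos hκ 2)) hY0) (pow_pos (show (0:ℝ) < Y - 1 by linarith) 2)
      linarith [h1, sq_nonneg (4*κ*Y - (Y^2-1))]
    rcases mul_neg_iff.mp hprod with ⟨_, h⟩ | ⟨h, _⟩
    · linarith
    · exact h
  refine ⟨?_, ?_, ?_⟩
  · have := mul_pos (pow_pos hκ 4) habr
    linarith [this]
  · have := mul_pos (mul_pos (by norm_num : (0:ℝ) < 2) (pow_pos hκ 2)) hbbr
    linarith [this]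
  · linarith [hcbr]
end
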